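/- Let $\mathcal{D}$ be a Cartan datum of type $A_n$ over a finite abelian group $\Gamma$, $\mu \in k^{\Phi^+}$, and define $u_{ij}(\mu) \in k[\Gamma]$ inductively by $u_{ij}(\mu) = \mu_{ij}(1 - g_{ij}^N) + \sum_{i < p < j} (q-1)^N \mu_{ip}\, u_{pj}(\mu)$. If $\mu$ satisfies (R2) (i.e. $\mu_{ij} = 0$ whenever $\chi_{ij}^N \neq 1$), then $u_{ij}(\mu) = 0$ for all $1 \leq i < j \leq n+1$ with $\chi_{ij}^N \neq 1$. -/

import Mathlib

open Finset

/-- The elements `u_{ij}(μ)` of the group algebra `k[Γ]`, defined inductively by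
`u_{ij}(μ) = μ_{ij}(1 - g_{ij}^N) + ∑_{i<p<j} (q-1)^N μ_{ip} u_{pj}(μ)`,
where `g_{ij} = g_i g_{i+1} ⋯ g_{j-1}`. -/
noncomputable def uElt {k : Type*} [Field k] {Γ : Type*} [CommGroup Γ]
    (g : ℕ → Γ) (q : k) (N : ℕ) (μ : ℕ → ℕ → k) : ℕ → ℕ → MonoidAlgebra k Γ
  | i, j =>
    μ i j • ((1 : MonoidAlgebra k Γ)
        - MonoidAlgebra.of k Γ ((∏ t ∈ Finset.Ico i j, g t) ^ N))
      + ∑ p ∈ (Finset.Ioo i j).attach,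
          ((q - 1) ^ N * μ i ↑p) • uElt g q N μ ↑p j
  termination_by i j => j - i
  decreasing_by
    have := Finset.mem_Ioo.mp p.2
    omega

theorem pow_prod_Ico_ne_one_or {M : Type*} [CommMonoid M] (f : ℕ → M) (N : ℕ)
    {i p j : ℕ} (hip : i ≤ p) (hpj : p ≤ j) (h : (∏ t ∈ Ico i j, f t) ^ N ≠ 1) :
    (∏ t ∈ Ico i p, f t) ^ N ≠ 1 ∨ (∏ t ∈ Ico p j, f t) ^ N ≠ 1 := by
  contrapose! h
  rw [← prod_Ico_consecutive f hip hpj, mul_pow, h.1, h.2, one_mul]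

theorem uElt_eq_zero_of_pow_prod_ne_one {k : Type*} [Field k] {Γ : Type*} [CommGroup Γ]
    {M : Type*} [CommMonoid M] {n N : ℕ} {q : k} {g : ℕ → Γ} {χ : ℕ → M} {μ : ℕ → ℕ → k}
    (hR2 : ∀ a b, 1 ≤ a → a < b → b ≤ n + 1 → (∏ t ∈ Ico a b, χ t) ^ N ≠ 1 → μ a b = 0)
    {i j : ℕ} (hi : 1 ≤ i) (hij : i < j) (hj : j ≤ n + 1)
    (hχ : (∏ t ∈ Ico i j, χ t) ^ N ≠ 1) :
    uElt g q N μ i j = 0 := by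
  rw [uElt, hR2 i j hi hij hj hχ, zero_smul, zero_add]
  refine sum_eq_zero fun ⟨p, hp⟩ _ => ?_
  obtain ⟨hip, hpj⟩ := mem_Ioo.mp hp
  rcases pow_prod_Ico_ne_one_or χ N hip.le hpj.le hχ with hleft | hright
  · rw [hR2 i p hi hip (by omega) hleft, mul_zero, zero_smul]
  · rw [uElt_eq_zero_of_pow_prod_ne_one hR2 (by omega) hpj hj hright, smul_zero]
termination_by j - i

theorem stmt_13_general {k : Type*} [Field k] {Γ : Type*} [CommGroup Γ]
    (n N : ℕ)
    (q : k)
    (g : ℕ → Γ) (χ : ℕ → Γ →* kˣ)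
    (μ : ℕ → ℕ → k)
    (hR2 : ∀ a b, 1 ≤ a → a < b → b ≤ n + 1 →
      (∏ t ∈ Finset.Ico a b, χ t) ^ N ≠ 1 → μ a b = 0)
    (i j : ℕ) (hi : 1 ≤ i) (hij : i < j) (hj : j ≤ n + 1)
    (hχ : (∏ t ∈ Finset.Ico i j, χ t) ^ N ≠ 1) :
    uElt g q N μ i j = 0 :=
  uElt_eq_zero_of_pow_prod_ne_one hR2 hi hij hj hχ

/-- Let `𝒟` be a Cartan datum of type `A_n` over a finite abelian
group `Γ` and `μ ∈ k^{Φ⁺}` satisfying (R2): `μ_{ij} = 0` whenever `χ_{ij}^N ≠ 1`.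
Then `u_{ij}(μ) = 0` for all `1 ≤ i < j ≤ n+1` with `χ_{ij}^N ≠ 1`. -/
theorem stmt_13 {k : Type*} [Field k] {Γ : Type*} [CommGroup Γ] [Fintype Γ]
    (n N : ℕ) (hn : 2 ≤ n) (hNodd : Odd N) (hN1 : 1 < N)
    (q : k) (hq : IsPrimitiveRoot q N)
    (g : ℕ → Γ) (χ : ℕ → Γ →* kˣ)
    (hdiag : ∀ l, 1 ≤ l → l ≤ n → ((χ l) (g l) : k) = q)
    (hC1 : ∀ a b, 1 ≤ a → a ≤ n → 1 ≤ b → b ≤ n → (a + 1 = b ∨ b + 1 = a) →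
      ((χ b) (g a) : k) * ((χ a) (g b) : k) = q⁻¹)
    (hC2 : ∀ a b, 1 ≤ a → a ≤ n → 1 ≤ b → b ≤ n → (a + 2 ≤ b ∨ b + 2 ≤ a) →
      ((χ b) (g a) : k) * ((χ a) (g b) : k) = 1)
    (μ : ℕ → ℕ → k)
    (hR2 : ∀ a b, 1 ≤ a → a < b → b ≤ n + 1 →
      (∏ t ∈ Finset.Ico a b, χ t) ^ N ≠ 1 → μ a b = 0)
    (i j : ℕ) (hi : 1 ≤ i) (hij : i < j) (hj : j ≤ n + 1)
    (hχ : (∏ t ∈ Finset.Ico i j, χ t) ^ N ≠ 1) :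
    uElt g q N μ i j = 0 :=
  stmt_13_general n N q g χ μ hR2 i j hi hij hj hχ
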